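/- arXiv:2208.06299 — 5 statements merged into one kernel-verified Lean document; each statement's English description precedes it below -/
import Mathlib

section
/- Let n ≥ 4 and define permutations v(2), in one-line notation, by v(2) = [n, n-1, …, 5, 2, 1, 4, 3] (that is, v(2)(i) = n+1-i for 1 ≤ i ≤ n-4, v(2)(n-3) = 2, v(2)(n-2)=1, v(2)(n-1)=4, v(2)(n)=3). Then for u ∈ S_n, u ≤ v(2) in Bruhat order if and only if {u(n-1), u(n)} ∩ {1,2} = ∅. -/
/-- Bruhat order on `Sₙ`, via the tableau criterion: `u ≤ w` iff for every `q` and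
every threshold `k`, the number of positions `i ≤ q` with `u i ≥ k` is at most the
corresponding number for `w`. -/
def bruhatLE {n : ℕ} (u w : Equiv.Perm (Fin n)) : Prop :=
  ∀ q k : Fin n,
    (Finset.univ.filter fun i => i ≤ q ∧ k ≤ u i).card ≤
      (Finset.univ.filter fun i => i ≤ q ∧ k ≤ w i).card

/-!
Write `tailCount w q k` for the number of positions after `q` holding a value below `k`. Since
exactly `k` positions hold a value below `k`, the tableau criterion becomes
`u ≤ w ↔ tailCount u q k ≤ tailCount w q k` for all `q, k`.

Before the last four positions `v` agrees with the longest element: the positions after such a `q`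
carry exactly the `n - 1 - q` smallest values, and then no permutation has a larger tail count.
For the last four cuts the tail counts are sums over at most three entries: for `v` they read off
the values `0, 3, 2`, and the cut `n - 3` with threshold `2` shows that `u ≤ v` forces
`u (n - 2), u (n - 1) ≥ 2`. Conversely, once those two values are at least `2`, the tail
counts of `u` are at most those of `v` at each of these cuts.
-/

open Finset

section TailCount

variable {n : ℕ}

def tailCount (w : Equiv.Perm (Fin n)) (q k : ℕ) : ℕ :=
  #{i : Fin n | q < (i : ℕ) ∧ (w i : ℕ) < k}

theorem card_filter_perm_apply_lt (w : Equiv.Perm (Fin n)) (k : ℕ) :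
    #{i | (w i : ℕ) < k} = #{j : Fin n | (j : ℕ) < k} :=
  card_equiv w (by simp)

theorem card_filter_le_and_le_add (w : Equiv.Perm (Fin n)) (q k : Fin n) :
    #{i | i ≤ q ∧ k ≤ w i} + k = q + 1 + tailCount w q k := by
  have hhead : #{i | i ≤ q ∧ k ≤ w i} + #{i | i ≤ q ∧ w i < k} = q + 1 := by
    rw [← Fin.card_Iic, ← card_filter_add_card_filter_not (s := Iic q) (fun i => k ≤ w i)]
    simp only [not_le]
    congr 2 <;> ext i <;> simp
  have htail : #{i | i ≤ q ∧ w i < k} + tailCount w q k = #{i | (w i : ℕ) < k} := by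
    rw [← card_filter_add_card_filter_not (s := {i | (w i : ℕ) < k}) (· ≤ q), filter_filter,
      filter_filter, tailCount]
    congr 2 <;> ext i <;>
      simp only [mem_filter, mem_univ, true_and, Fin.lt_def, Fin.le_def] <;> omega
  rw [card_filter_perm_apply_lt, Fin.card_filter_val_lt] at htail
  have := k.isLt
  omega

theorem bruhatLE_iff_tailCount_le (u w : Equiv.Perm (Fin n)) :
    bruhatLE u w ↔ ∀ q k : Fin n, tailCount u q k ≤ tailCount w q k := by
  refine forall₂_congr fun q k => ?_
  have hu := card_filter_le_and_le_add u q k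
  have hw := card_filter_le_and_le_add w q k
  omega

theorem tailCount_le_of_lt_iff {u w : Equiv.Perm (Fin n)} {q m : ℕ}
    (hw : ∀ i : Fin n, q < (i : ℕ) ↔ (w i : ℕ) < m) (k : ℕ) :
    tailCount u q k ≤ tailCount w q k := by
  rcases le_total k m with hkm | hmk
  · have hw_eq : tailCount w q k = #{i | (w i : ℕ) < k} :=
      congrArg card (filter_congr fun i _ => ⟨And.right, fun h => ⟨(hw i).2 (by omega), h⟩⟩)
    rw [hw_eq, card_filter_perm_apply_lt, ← card_filter_perm_apply_lt u]
    exact card_le_card (monotone_filter_right _ fun _ _ => And.right)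
  · have hw_eq : tailCount w q k = #{i : Fin n | q < (i : ℕ)} :=
      congrArg card <| filter_congr fun i _ =>
        ⟨And.left, fun h => ⟨h, by have := (hw i).1 h; omega⟩⟩
    rw [hw_eq]
    exact card_le_card (monotone_filter_right _ fun _ _ => And.left)

theorem tailCount_eq_zero_of_le {w : Equiv.Perm (Fin n)} {q : ℕ} (hq : n ≤ q + 1) (k : ℕ) :
    tailCount w q k = 0 :=
  card_eq_zero.2 <| filter_eq_empty_iff.2 fun i _ h => by have := i.isLt; omega

theorem tailCount_eq_add_ite (w : Equiv.Perm (Fin n)) {q : ℕ} (i : Fin n)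
    (hi : (i : ℕ) = q + 1) (k : ℕ) :
    tailCount w q k = tailCount w i k + if (w i : ℕ) < k then 1 else 0 := by
  rw [tailCount, ← card_filter_add_card_filter_not (· ≠ i), filter_filter, filter_filter]
  congr 1
  · congr 1
    ext j
    simp only [ne_eq, ← Fin.val_ne_iff, mem_filter, mem_univ, true_and, Fin.val_fin_lt]
    omega
  · split_ifs with h
    · refine card_eq_one.2 ⟨i, ?_⟩
      ext j
      simp only [mem_filter, mem_univ, true_and, not_not, mem_singleton]
      grind
    · exact card_eq_zero.2 (filter_eq_empty_iff.2 (by grind))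

end TailCount

section LastPositions

variable {n : ℕ} (w : Equiv.Perm (Fin n)) (k : ℕ)

theorem tailCount_sub_two (hn : 1 < n) :
    tailCount w (n - 2) k = if (w ⟨n - 1, by omega⟩ : ℕ) < k then 1 else 0 := by
  rw [tailCount_eq_add_ite w ⟨n - 1, by omega⟩ (by simp only; omega), Fin.val_mk,
    tailCount_eq_zero_of_le (by omega), zero_add]

theorem tailCount_sub_three (hn : 2 < n) :
    tailCount w (n - 3) k = (if (w ⟨n - 2, by omega⟩ : ℕ) < k then 1 else 0) +
      if (w ⟨n - 1, by omega⟩ : ℕ) < k then 1 else 0 := by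
  rw [tailCount_eq_add_ite w ⟨n - 2, by omega⟩ (by simp only; omega), Fin.val_mk,
    tailCount_sub_two w k (by omega), add_comm]

theorem tailCount_sub_four (hn : 3 < n) :
    tailCount w (n - 4) k = (if (w ⟨n - 3, by omega⟩ : ℕ) < k then 1 else 0) +
      (if (w ⟨n - 2, by omega⟩ : ℕ) < k then 1 else 0) +
      if (w ⟨n - 1, by omega⟩ : ℕ) < k then 1 else 0 := by
  rw [tailCount_eq_add_ite w ⟨n - 3, by omega⟩ (by simp only; omega), Fin.val_mk,
    tailCount_sub_three w k (by omega)]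
  ring

end LastPositions

theorem stmt_7 (n : ℕ) (hn : 4 ≤ n) (v : Equiv.Perm (Fin n))
    (hv : ∀ i : Fin n, (v i : ℕ) =
      if (i : ℕ) < n - 4 then n - 1 - (i : ℕ)
      else if (i : ℕ) = n - 4 then 1
      else if (i : ℕ) = n - 3 then 0
      else if (i : ℕ) = n - 2 then 3
      else 2) :
    ∀ u : Equiv.Perm (Fin n),
      bruhatLE u v ↔
        ((u ⟨n - 2, by omega⟩ : ℕ) ≠ 0 ∧ (u ⟨n - 2, by omega⟩ : ℕ) ≠ 1 ∧
          (u ⟨n - 1, by omega⟩ : ℕ) ≠ 0 ∧ (u ⟨n - 1, by omega⟩ : ℕ) ≠ 1) := by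
  intro u
  obtain ⟨hv_a, hv_b, hv_c⟩ :
      (v ⟨n - 3, by omega⟩ : ℕ) = 0 ∧ (v ⟨n - 2, by omega⟩ : ℕ) = 3 ∧
        (v ⟨n - 1, by omega⟩ : ℕ) = 2 := by
    refine ⟨?_, ?_, ?_⟩ <;> rw [hv] <;> simp only <;> split_ifs <;> omega
  rw [bruhatLE_iff_tailCount_le]
  constructor
  · intro h
    have h32 : tailCount u (n - 3) 2 ≤ tailCount v (n - 3) 2 :=
      h ⟨n - 3, by omega⟩ ⟨2, by omega⟩
    rw [tailCount_sub_three _ _ (by omega), tailCount_sub_three _ _ (by omega), hv_b, hv_c] at h32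
    split_ifs at h32 <;> omega
  · rintro ⟨hb0, hb1, hc0, hc1⟩ q k
    have hbc : (u ⟨n - 2, by omega⟩ : ℕ) ≠ u ⟨n - 1, by omega⟩ :=
      Fin.val_ne_iff.2 (u.injective.ne (by simp only [ne_eq, Fin.mk.injEq]; omega))
    obtain hq | hq | hq | hq | hq : (q : ℕ) < n - 4 ∨ (q : ℕ) = n - 4 ∨
        (q : ℕ) = n - 3 ∨ (q : ℕ) = n - 2 ∨ (q : ℕ) = n - 1 := by omega
    · exact tailCount_le_of_lt_iff (m := n - 1 - q) (fun i => by rw [hv]; split_ifs <;> omega) k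
    · rw [hq, tailCount_sub_four _ _ (by omega), tailCount_sub_four _ _ (by omega), hv_a, hv_b,
        hv_c]
      split_ifs <;> omega
    · rw [hq, tailCount_sub_three _ _ (by omega), tailCount_sub_three _ _ (by omega), hv_b, hv_c]
      split_ifs <;> omega
    · rw [hq, tailCount_sub_two _ _ (by omega), tailCount_sub_two _ _ (by omega), hv_c]
      split_ifs <;> omega
    · rw [hq, tailCount_eq_zero_of_le (by omega)]
      exact Nat.zero_le _
end

section
/- Let n = 3 and let ℓ_1, ℓ_2, ℓ_3 ∈ ℂ[z_{21}, z_{31}] be affine-linear polynomials (degree at most 1). Define D = det of the 3×3 matrix with columns (ℓ_1, ℓ_2, ℓ_3)ᵀ, (1, z_{21}, z_{31})ᵀ, (0, 1, z_{32})ᵀ, a polynomial in ℂ[z_{21}, z_{31}, z_{32}]. Then D = 0 if and only if there exists c ∈ ℂ with ℓ_1 = c, ℓ_2 = c·z_{21}, ℓ_3 = c·z_{31}. -/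
open MvPolynomial

theorem stmt_13 (a : Fin 3 → Fin 3 → ℂ)
    (ℓ : Fin 3 → MvPolynomial (Fin 3) ℂ)
    (hℓ : ∀ i, ℓ i = C (a i 0) + C (a i 1) * X 0 + C (a i 2) * X 1)
    (D : MvPolynomial (Fin 3) ℂ)
    (hD : D = Matrix.det !![ℓ 0, 1, 0; ℓ 1, X 0, 1; ℓ 2, X 1, X 2]) :
    D = 0 ↔ ∃ c : ℂ, ℓ 0 = C c ∧ ℓ 1 = C c * X 0 ∧ ℓ 2 = C c * X 1 := by
  have hdet : Matrix.det !![ℓ 0, 1, 0; ℓ 1, X 0, 1; ℓ 2, X 1, X 2] =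
      ℓ 0 * (X 0 * X 2) - ℓ 1 * X 2 + ℓ 2 - ℓ 0 * X 1 := by
    rw [Matrix.det_fin_three]
    norm_num [Matrix.cons_val_two, Matrix.tail_cons]
    ring
  rw [hdet] at hD
  constructor
  · intro h0
    have hv : ∀ v : Fin 3 → ℂ, eval v D = 0 := fun v => by rw [h0]; simp
    have key : ∀ v : Fin 3 → ℂ,
        (a 0 0 + a 0 1 * v 0 + a 0 2 * v 1) * (v 0 * v 2)
        - (a 1 0 + a 1 1 * v 0 + a 1 2 * v 1) * v 2
        + (a 2 0 + a 2 1 * v 0 + a 2 2 * v 1)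
        - (a 0 0 + a 0 1 * v 0 + a 0 2 * v 1) * v 1 = 0 := by
      intro v
      have := hv v
      rw [hD, hℓ 0, hℓ 1, hℓ 2] at this
      simp only [map_add, map_sub, map_mul, map_one, eval_C, eval_X] at this
      linear_combination this
    have e1 := key ![0,0,0]
    have e2 := key ![0,0,1]
    have e3 := key ![1,0,0]
    have e4 := key ![0,1,0]
    have e5 := key ![0,2,0]
    have e6 := key ![1,0,1]
    have e7 := key ![2,0,1]
    have e8 := key ![0,1,1]
    simp only [Matrix.cons_val_zero, Matrix.cons_val_one, Matrix.head_cons,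
      Matrix.cons_val_two, Matrix.tail_cons] at e1 e2 e3 e4 e5 e6 e7 e8
    have h20 : a 2 0 = 0 := by linear_combination e1
    have h10 : a 1 0 = 0 := by linear_combination e1 - e2
    have h21 : a 2 1 = 0 := by linear_combination e3 - e1
    have h01 : a 0 1 = 0 := by
      linear_combination (e7 - 2*e6)/2 - h10/2 + h20/2
    have h11 : a 1 1 = a 0 0 := by
      linear_combination -e6 + h01 - h10 + h20 + h21
    have h02 : a 0 2 = 0 := by
      linear_combination -(e5 - 2*e4)/2 - h20/2
    have h22 : a 2 2 = a 0 0 := by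
      linear_combination e4 + h02 - h20
    have h12 : a 1 2 = 0 := by
      linear_combination -e8 - h10 + h20 + h22 - h02
    refine ⟨a 0 0, ?_, ?_, ?_⟩
    · rw [hℓ 0, h01, h02]; simp
    · rw [hℓ 1, h10, h11, h12]; simp
    · rw [hℓ 2, h20, h21, h22]; simp
  · rintro ⟨c, h1, h2, h3⟩
    rw [hD, h1, h2, h3]; ring
end

section
/- With the setup of the previous statement (n = 3, D = (z_{32}z_{21} - z_{31})ℓ_1 - z_{32}ℓ_2 + ℓ_3 where ℓ_i = a_{i1} + a_{i2}z_{21} + a_{i3}z_{31}), if D ≠ 0 then there exists a lexicographic monomial order on ℂ[z_{21}, z_{31}, z_{32}] under which the leading monomial of D is square-free. -/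
open MvPolynomial Finsupp

set_option maxHeartbeats 1000000

noncomputable def ee (x y z : ℕ) : Fin 3 →₀ ℕ :=
  Finsupp.single 0 x + Finsupp.single 1 y + Finsupp.single 2 z

lemma ee_apply' (x y z : ℕ) (j : Fin 3) : ee x y z j = ![x, y, z] j := by
  fin_cases j <;> simp [ee, Finsupp.single_apply]

lemma ee_inj {x y z x' y' z' : ℕ} : ee x y z = ee x' y' z' ↔ x = x' ∧ y = y' ∧ z = z' := by
  constructor
  · intro h
    refine ⟨?_, ?_, ?_⟩
    · have := congrArg (fun f => f 0) h; simpa [ee_apply'] using this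
    · have := congrArg (fun f => f 1) h; simpa [ee_apply'] using this
    · have := congrArg (fun f => f 2) h; simpa [ee_apply'] using this
  · rintro ⟨rfl, rfl, rfl⟩; rfl

lemma monomial_ee (x y z : ℕ) (q : ℂ) :
    (monomial (ee x y z) q : MvPolynomial (Fin 3) ℂ) = C q * X 0 ^ x * X 1 ^ y * X 2 ^ z := by
  rw [ee, X_pow_eq_monomial, X_pow_eq_monomial, X_pow_eq_monomial, C_apply,
    monomial_mul, monomial_mul, monomial_mul]
  simp

section
variable (a : Fin 3 → Fin 3 → ℂ)

noncomputable def DD : MvPolynomial (Fin 3) ℂ :=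
  monomial (ee 2 0 1) (a 0 1) + monomial (ee 0 2 0) (-(a 0 2)) + monomial (ee 1 1 1) (a 0 2) +
  monomial (ee 1 0 1) (a 0 0 - a 1 1) + monomial (ee 0 1 1) (-(a 1 2)) +
  monomial (ee 1 1 0) (-(a 0 1)) + monomial (ee 0 0 1) (-(a 1 0)) +
  monomial (ee 0 1 0) (a 2 2 - a 0 0) + monomial (ee 1 0 0) (a 2 1) + monomial (ee 0 0 0) (a 2 0)

lemma D_eq :
    (X 2 * X 0 - X 1) * (C (a 0 0) + C (a 0 1) * X 0 + C (a 0 2) * X 1)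
      - X 2 * (C (a 1 0) + C (a 1 1) * X 0 + C (a 1 2) * X 1)
      + (C (a 2 0) + C (a 2 1) * X 0 + C (a 2 2) * X 1) = DD a := by
  simp only [DD, monomial_ee, map_sub, map_neg]
  ring

lemma coeff_DD (x y z : ℕ) : coeff (ee x y z) (DD a) =
    (if 2 = x ∧ 0 = y ∧ 1 = z then a 0 1 else 0) +
    (if 0 = x ∧ 2 = y ∧ 0 = z then -(a 0 2) else 0) +
    (if 1 = x ∧ 1 = y ∧ 1 = z then a 0 2 else 0) +
    (if 1 = x ∧ 0 = y ∧ 1 = z then a 0 0 - a 1 1 else 0) +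
    (if 0 = x ∧ 1 = y ∧ 1 = z then -(a 1 2) else 0) +
    (if 1 = x ∧ 1 = y ∧ 0 = z then -(a 0 1) else 0) +
    (if 0 = x ∧ 0 = y ∧ 1 = z then -(a 1 0) else 0) +
    (if 0 = x ∧ 1 = y ∧ 0 = z then a 2 2 - a 0 0 else 0) +
    (if 1 = x ∧ 0 = y ∧ 0 = z then a 2 1 else 0) +
    (if 0 = x ∧ 0 = y ∧ 0 = z then a 2 0 else 0) := by
  simp only [DD, coeff_add, coeff_monomial, ee_inj]

lemma supp_DD : ∀ m ∈ (DD a).support, m = ee 2 0 1 ∨ m = ee 0 2 0 ∨ m = ee 1 1 1 ∨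
    m = ee 1 0 1 ∨ m = ee 0 1 1 ∨ m = ee 1 1 0 ∨ m = ee 0 0 1 ∨ m = ee 0 1 0 ∨
    m = ee 1 0 0 ∨ m = ee 0 0 0 := by
  intro m hm
  by_contra h
  push_neg at h
  obtain ⟨h1,h2,h3,h4,h5,h6,h7,h8,h9,h10⟩ := h
  rw [MvPolynomial.mem_support_iff] at hm
  apply hm
  simp only [DD, coeff_add, coeff_monomial]
  rw [if_neg (fun h => h1 h.symm), if_neg (fun h => h2 h.symm), if_neg (fun h => h3 h.symm),
    if_neg (fun h => h4 h.symm), if_neg (fun h => h5 h.symm), if_neg (fun h => h6 h.symm),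
    if_neg (fun h => h7 h.symm), if_neg (fun h => h8 h.symm), if_neg (fun h => h9 h.symm),
    if_neg (fun h => h10 h.symm)]
  ring

lemma mem_ee (x y z : ℕ) (h : coeff (ee x y z) (DD a) ≠ 0) : ee x y z ∈ (DD a).support :=
  MvPolynomial.mem_support_iff.2 h

end

lemma main (a : Fin 3 → Fin 3 → ℂ) (hne : DD a ≠ 0) :
    ∃ σ : Equiv.Perm (Fin 3), ∃ d ∈ (DD a).support,
      (∀ e ∈ (DD a).support, e ≠ d →
        ∃ i : Fin 3, (∀ j : Fin 3, j < i → e (σ j) = d (σ j)) ∧ e (σ i) < d (σ i)) ∧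
      ∀ i : Fin 3, d i ≤ 1 := by
  by_cases h02 : a 0 2 = 0
  case neg =>
    refine ⟨Equiv.swap 0 2, ee 1 1 1, mem_ee a 1 1 1 (by rw [coeff_DD]; simpa using h02), ?_,
      by simp only [ee_apply']; decide⟩
    intro e he hne'
    rcases supp_DD a e he with rfl|rfl|rfl|rfl|rfl|rfl|rfl|rfl|rfl|rfl
    all_goals first
      | exact absurd rfl hne'
      | (simp only [ee_apply']; decide)
  case pos =>
  by_cases h01 : a 0 1 = 0
  case neg =>
    refine ⟨Equiv.swap 0 1, ee 1 1 0, mem_ee a 1 1 0 (by rw [coeff_DD]; simpa using h01), ?_,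
      by simp only [ee_apply']; decide⟩
    intro e he hne'
    rcases supp_DD a e he with rfl|rfl|rfl|rfl|rfl|rfl|rfl|rfl|rfl|rfl
    all_goals first
      | exact absurd rfl hne'
      | (simp only [ee_apply']; decide)
      | (refine absurd (MvPolynomial.mem_support_iff.1 he) ?_; rw [coeff_DD]; simp [h02])
  case pos =>
  by_cases h12 : a 1 2 = 0
  case neg =>
    refine ⟨Equiv.swap 0 2, ee 0 1 1, mem_ee a 0 1 1 (by rw [coeff_DD]; simpa using h12), ?_,
      by simp only [ee_apply']; decide⟩
    intro e he hne'
    rcases supp_DD a e he with rfl|rfl|rfl|rfl|rfl|rfl|rfl|rfl|rfl|rfl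
    all_goals first
      | exact absurd rfl hne'
      | (simp only [ee_apply']; decide)
      | (refine absurd (MvPolynomial.mem_support_iff.1 he) ?_; rw [coeff_DD]; simp [h01, h02])
  case pos =>
  by_cases hA : a 0 0 - a 1 1 = 0
  case neg =>
    refine ⟨Equiv.swap 0 2, ee 1 0 1, mem_ee a 1 0 1 (by rw [coeff_DD]; simpa using hA), ?_,
      by simp only [ee_apply']; decide⟩
    intro e he hne'
    rcases supp_DD a e he with rfl|rfl|rfl|rfl|rfl|rfl|rfl|rfl|rfl|rfl
    all_goals first
      | exact absurd rfl hne'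
      | (simp only [ee_apply']; decide)
      | (refine absurd (MvPolynomial.mem_support_iff.1 he) ?_; rw [coeff_DD];
          simp [h01, h02, h12])
  case pos =>
  by_cases hB : a 1 0 = 0
  case neg =>
    refine ⟨Equiv.swap 0 2, ee 0 0 1, mem_ee a 0 0 1 (by rw [coeff_DD]; simpa using hB), ?_,
      by simp only [ee_apply']; decide⟩
    intro e he hne'
    rcases supp_DD a e he with rfl|rfl|rfl|rfl|rfl|rfl|rfl|rfl|rfl|rfl
    all_goals first
      | exact absurd rfl hne'
      | (simp only [ee_apply']; decide)
      | (refine absurd (MvPolynomial.mem_support_iff.1 he) ?_; rw [coeff_DD];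
          simp [h01, h02, h12, hA])
  case pos =>
  by_cases hC : a 2 2 - a 0 0 = 0
  case neg =>
    refine ⟨Equiv.swap 0 2, ee 0 1 0, mem_ee a 0 1 0 (by rw [coeff_DD]; simpa using hC), ?_,
      by simp only [ee_apply']; decide⟩
    intro e he hne'
    rcases supp_DD a e he with rfl|rfl|rfl|rfl|rfl|rfl|rfl|rfl|rfl|rfl
    all_goals first
      | exact absurd rfl hne'
      | (simp only [ee_apply']; decide)
      | (refine absurd (MvPolynomial.mem_support_iff.1 he) ?_; rw [coeff_DD];
          simp [h01, h02, h12, hA, hB])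
  case pos =>
  by_cases hE : a 2 1 = 0
  case neg =>
    refine ⟨Equiv.swap 0 2, ee 1 0 0, mem_ee a 1 0 0 (by rw [coeff_DD]; simpa using hE), ?_,
      by simp only [ee_apply']; decide⟩
    intro e he hne'
    rcases supp_DD a e he with rfl|rfl|rfl|rfl|rfl|rfl|rfl|rfl|rfl|rfl
    all_goals first
      | exact absurd rfl hne'
      | (simp only [ee_apply']; decide)
      | (refine absurd (MvPolynomial.mem_support_iff.1 he) ?_; rw [coeff_DD];
          simp [h01, h02, h12, hA, hB, hC])
  case pos =>
    have h20 : a 2 0 ≠ 0 := by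
      intro h
      exact hne (by simp [DD, h01, h02, h12, hA, hB, hC, hE, h])
    refine ⟨Equiv.swap 0 2, ee 0 0 0, mem_ee a 0 0 0 (by rw [coeff_DD]; simpa using h20), ?_,
      by simp only [ee_apply']; decide⟩
    intro e he hne'
    rcases supp_DD a e he with rfl|rfl|rfl|rfl|rfl|rfl|rfl|rfl|rfl|rfl
    all_goals first
      | exact absurd rfl hne'
      | (simp only [ee_apply']; decide)
      | (refine absurd (MvPolynomial.mem_support_iff.1 he) ?_; rw [coeff_DD];
          simp [h01, h02, h12, hA, hB, hC, hE])



theorem stmt_14 (a : Fin 3 → Fin 3 → ℂ)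
    (ℓ : Fin 3 → MvPolynomial (Fin 3) ℂ)
    (hℓ : ∀ i, ℓ i = C (a i 0) + C (a i 1) * X 0 + C (a i 2) * X 1)
    (D : MvPolynomial (Fin 3) ℂ)
    (hD : D = (X 2 * X 0 - X 1) * ℓ 0 - X 2 * ℓ 1 + ℓ 2)
    (hne : D ≠ 0) :
    -- there is an ordering of the variables such that, with respect to the induced
    -- lexicographic comparison of exponent vectors, the leading monomial of `D` is
    -- square-free
    ∃ σ : Equiv.Perm (Fin 3), ∃ d ∈ D.support,
      (∀ e ∈ D.support, e ≠ d →
        ∃ i : Fin 3, (∀ j : Fin 3, j < i → e (σ j) = d (σ j)) ∧ e (σ i) < d (σ i)) ∧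
      ∀ i : Fin 3, d i ≤ 1 := by
  have hD' : D = DD a := by rw [hD, hℓ 0, hℓ 1, hℓ 2, D_eq]
  rw [hD'] at hne ⊢
  exact main a hne
end

section
/- Let K be a field and let I ⊆ K[x_1,…,x_n] be an ideal. If the initial ideal in_≺(I) with respect to some monomial order ≺ is generated by square-free monomials, then I is a radical ideal. -/
open MvPolynomial

/-- `d` is the leading exponent (exponent of the leading monomial) of `f` with respect
to the monomial order `m`. -/
def IsLeadingExp {n : ℕ} {K : Type*} [Field K] (m : MonomialOrder (Fin n))
    (f : MvPolynomial (Fin n) K) (d : Fin n →₀ ℕ) : Prop :=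
  d ∈ f.support ∧ ∀ e ∈ f.support, m.toSyn e ≤ m.toSyn d

/-- The initial ideal of `I` with respect to `m`: the ideal generated by the leading
monomials of the nonzero elements of `I`. -/
noncomputable def initialIdeal {n : ℕ} {K : Type*} [Field K] (m : MonomialOrder (Fin n))
    (I : Ideal (MvPolynomial (Fin n) K)) : Ideal (MvPolynomial (Fin n) K) :=
  Ideal.span {g | ∃ f ∈ I, f ≠ 0 ∧ ∃ d, IsLeadingExp m f d ∧ g = monomial d (1 : K)}

/-!
If `f ^ 2 ∈ I` with leading exponent `d`, then `x ^ (2 • d)` lies in `in(I)`; as `in(I)` is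
generated by square-free monomials, so does `x ^ d`, i.e. some nonzero `g ∈ I` has the same
leading exponent as `f`. Their S-polynomial `lc(g) • f - lc(f) • g` is congruent modulo `I` to a
unit multiple of `f`, so its square still lies in `I`, while its leading exponent is smaller.
Well-founded induction on the leading exponent gives `f ∈ I`.
-/

namespace MonomialOrder

variable {σ R : Type*} [CommRing R] (m : MonomialOrder σ)

theorem sPolynomial_of_degree_eq {f g : MvPolynomial σ R} (h : m.degree f = m.degree g) :
    m.sPolynomial f g = C (m.leadingCoeff g) * f - C (m.leadingCoeff f) * g := by
  simp only [sPolynomial, h, tsub_self, monomial_zero']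

end MonomialOrder

namespace Ideal

theorem sub_sq_mem_of_sq_mem {R : Type*} [CommRing R] {I : Ideal R} {a b : R}
    (ha : a ^ 2 ∈ I) (hb : b ∈ I) : (a - b) ^ 2 ∈ I := by
  rw [show (a - b) ^ 2 = a ^ 2 + b * (b - 2 * a) by ring]
  exact I.add_mem ha (I.mul_mem_right _ hb)

variable {σ K : Type*} [Field K] (m : MonomialOrder σ)

theorem isRadical_of_exists_degree_eq {I : Ideal (MvPolynomial σ K)}
    (h : ∀ f, f ≠ 0 → f ^ 2 ∈ I → ∃ g ∈ I, g ≠ 0 ∧ m.degree g = m.degree f) :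
    I.IsRadical := by
  rw [isRadical_iff_pow_one_lt 2 one_lt_two]
  intro f hf2
  induction hd : m.toSyn (m.degree f) using WellFoundedLT.induction generalizing f with
  | _ d ih =>
  by_cases hf0 : f = 0
  · exact hf0 ▸ I.zero_mem
  obtain ⟨g, hgI, hg0, hgf⟩ := h f hf0 hf2
  have hunit : IsUnit (C (m.leadingCoeff g) : MvPolynomial σ K) :=
    (isUnit_iff_ne_zero.mpr (m.leadingCoeff_ne_zero_iff.mpr hg0)).map C
  have hr : C (m.leadingCoeff f) * g ∈ I := I.mul_mem_left _ hgI
  rw [← I.unit_mul_mem_iff_mem hunit]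
  have hs := m.sPolynomial_of_degree_eq hgf.symm
  suffices m.sPolynomial f g ∈ I by simpa [hs] using I.add_mem this hr
  by_cases hs0 : m.sPolynomial f g = 0
  · exact hs0 ▸ I.zero_mem
  refine ih _ (hd ▸ m.sPolynomial_lt_of_degree_ne_zero_of_degree_eq hgf.symm hs0) _ ?_ rfl
  rw [hs]
  refine sub_sq_mem_of_sq_mem ?_ hr
  rw [mul_pow]
  exact I.mul_mem_left _ hf2

end Ideal

namespace MvPolynomial

variable {σ R : Type*} [CommSemiring R] [Nontrivial R]

theorem monomial_mem_span_monomial_image_iff {S : Set (σ →₀ ℕ)} {d : σ →₀ ℕ} :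
    monomial d (1 : R) ∈ Ideal.span ((fun s => monomial s (1 : R)) '' S) ↔ ∃ s ∈ S, s ≤ d := by
  classical
  simp only [mem_ideal_span_monomial_image, support_monomial, if_neg one_ne_zero,
    Finset.mem_singleton, forall_eq]

theorem monomial_mem_span_squarefree_of_nsmul_mem {S : Set (σ →₀ ℕ)}
    (hS : ∀ s ∈ S, ∀ i, s i ≤ 1) {d : σ →₀ ℕ} {k : ℕ}
    (h : monomial (k • d) (1 : R) ∈ Ideal.span ((fun s => monomial s (1 : R)) '' S)) :
    monomial d (1 : R) ∈ Ideal.span ((fun s => monomial s (1 : R)) '' S) := by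
  rw [monomial_mem_span_monomial_image_iff] at h ⊢
  obtain ⟨s, hsS, hsd⟩ := h
  refine ⟨s, hsS, fun i => ?_⟩
  obtain hdi | hdi := Nat.eq_zero_or_pos (d i)
  · simpa [hdi] using hsd i
  · exact (hS s hsS i).trans hdi

end MvPolynomial

section InitialIdeal

variable {n : ℕ} {K : Type*} [Field K] (m : MonomialOrder (Fin n))

theorem isLeadingExp_iff {f : MvPolynomial (Fin n) K} {d : Fin n →₀ ℕ} :
    IsLeadingExp m f d ↔ f ≠ 0 ∧ m.degree f = d := by
  constructor
  · rintro ⟨hd, hmax⟩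
    have hf0 : f ≠ 0 := ne_zero_iff.mpr ⟨d, mem_support_iff.mp hd⟩
    exact ⟨hf0, m.toSyn.injective (le_antisymm (m.degree_le_iff.mpr hmax) (m.le_degree hd))⟩
  · rintro ⟨hf0, rfl⟩
    exact ⟨m.degree_mem_support hf0, fun e he => m.le_degree he⟩

theorem initialIdeal_eq_span_degree (I : Ideal (MvPolynomial (Fin n) K)) :
    initialIdeal m I = Ideal.span ((fun d => monomial d (1 : K)) ''
      (m.degree '' {f | f ∈ I ∧ f ≠ 0})) := by
  simp only [initialIdeal, isLeadingExp_iff, Set.image_image]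
  congr 1
  ext p
  simp only [Set.mem_ofPred_eq, Set.mem_image]
  constructor
  · rintro ⟨f, hfI, hf0, _, ⟨-, rfl⟩, rfl⟩
    exact ⟨f, ⟨hfI, hf0⟩, rfl⟩
  · rintro ⟨f, ⟨hfI, hf0⟩, rfl⟩
    exact ⟨f, hfI, hf0, _, ⟨hf0, rfl⟩, rfl⟩

theorem monomial_degree_mem_initialIdeal {I : Ideal (MvPolynomial (Fin n) K)}
    {f : MvPolynomial (Fin n) K} (hfI : f ∈ I) (hf0 : f ≠ 0) :
    monomial (m.degree f) (1 : K) ∈ initialIdeal m I :=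
  Ideal.subset_span ⟨f, hfI, hf0, _, (isLeadingExp_iff m).mpr ⟨hf0, rfl⟩, rfl⟩

theorem exists_degree_eq_of_monomial_mem_initialIdeal {I : Ideal (MvPolynomial (Fin n) K)}
    {d : Fin n →₀ ℕ} (h : monomial d (1 : K) ∈ initialIdeal m I) :
    ∃ g ∈ I, g ≠ 0 ∧ m.degree g = d := by
  rw [initialIdeal_eq_span_degree, monomial_mem_span_monomial_image_iff] at h
  obtain ⟨_, ⟨f, ⟨hfI, hf0⟩, rfl⟩, hfd⟩ := h
  have hmon0 : monomial (d - m.degree f) (1 : K) ≠ 0 := by simp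
  refine ⟨monomial (d - m.degree f) 1 * f, I.mul_mem_left _ hfI, mul_ne_zero hmon0 hf0, ?_⟩
  classical
  rw [m.degree_mul hmon0 hf0, m.degree_monomial, if_neg one_ne_zero, tsub_add_cancel_of_le hfd]

end InitialIdeal

theorem stmt_15 (n : ℕ) (K : Type*) [Field K]
    (I : Ideal (MvPolynomial (Fin n) K)) (m : MonomialOrder (Fin n))
    (S : Set (Fin n →₀ ℕ)) (hsf : ∀ d ∈ S, ∀ i, d i ≤ 1)
    (hgen : initialIdeal m I =
      Ideal.span ((fun d => (monomial d (1 : K) : MvPolynomial (Fin n) K)) '' S)) :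
    I.IsRadical := by
  refine Ideal.isRadical_of_exists_degree_eq m fun f hf0 hf2 => ?_
  apply exists_degree_eq_of_monomial_mem_initialIdeal
  have hsq := monomial_degree_mem_initialIdeal m hf2 (pow_ne_zero 2 hf0)
  rw [m.degree_pow, hgen] at hsq
  rw [hgen]
  exact monomial_mem_span_squarefree_of_nsmul_mem hsf hsq
end

section
/- (Tableau criterion, one direction for a concrete family) Let n ≥ 4 and v(n-2) ∈ S_n be given in one-line notation by [n-2, n-3, n, n-1, n-4, n-5, …, 1] (i.e., v(n-2)(1)=n-2, v(n-2)(2)=n-3, v(n-2)(3)=n, v(n-2)(4)=n-1, and v(n-2)(i)=n+1-i for 5 ≤ i ≤ n). Then for u ∈ S_n, u ≤ v(n-2) in Bruhat order if and only if {u(1), u(2)} ∩ {n-1, n} = ∅. -/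
open Finset

namespace Equiv.Perm

variable {n : ℕ}

def prefixCount (w : Equiv.Perm (Fin n)) (p k : ℕ) : ℕ :=
  #{i : Fin n | (i : ℕ) < p ∧ k ≤ (w i : ℕ)}

theorem bruhatLE_iff_prefixCount (u w : Equiv.Perm (Fin n)) :
    bruhatLE u w ↔ ∀ q k : Fin n, u.prefixCount (q + 1) k ≤ w.prefixCount (q + 1) k := by
  simp only [bruhatLE, prefixCount, Fin.le_def, Nat.lt_succ_iff]

@[simp]
theorem prefixCount_zero (w : Equiv.Perm (Fin n)) (k : ℕ) : w.prefixCount 0 k = 0 := by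
  simp [prefixCount]

theorem prefixCount_succ (w : Equiv.Perm (Fin n)) {p : ℕ} (hp : p < n) (k : ℕ) :
    w.prefixCount (p + 1) k = w.prefixCount p k + if k ≤ (w ⟨p, hp⟩ : ℕ) then 1 else 0 := by
  have hsplit : univ.filter (fun i : Fin n => (i : ℕ) < p + 1 ∧ k ≤ (w i : ℕ)) =
      univ.filter (fun i : Fin n => (i : ℕ) < p ∧ k ≤ (w i : ℕ)) ∪
        ({⟨p, hp⟩} : Finset (Fin n)).filter fun i => k ≤ (w i : ℕ) := by
    ext i
    simp only [mem_union, mem_filter, mem_univ, true_and, mem_singleton, Fin.ext_iff]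
    omega
  rw [prefixCount, prefixCount, hsplit, card_union_of_disjoint, filter_singleton, apply_ite card,
    card_singleton, card_empty]
  simp only [disjoint_left, mem_filter, mem_univ, true_and, mem_singleton, Fin.ext_iff]
  omega

theorem card_filter_le_apply (w : Equiv.Perm (Fin n)) (k : ℕ) :
    #{i : Fin n | k ≤ (w i : ℕ)} = n - k := by
  have hcompl := card_filter_add_card_filter_not (s := (univ : Finset (Fin n)))
    fun j : Fin n => (j : ℕ) < k
  rw [Fin.card_filter_val_lt, card_univ, Fintype.card_fin] at hcompl
  rw [card_bijective w w.bijective (t := {j : Fin n | k ≤ (j : ℕ)}) (by simp)]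
  simp only [not_lt] at hcompl
  omega

theorem prefixCount_le_min (w : Equiv.Perm (Fin n)) (p k : ℕ) :
    w.prefixCount p k ≤ min p (n - k) := by
  refine le_min ?_ ?_
  · calc w.prefixCount p k ≤ #{i : Fin n | (i : ℕ) < p} :=
          card_le_card (monotone_filter_right _ fun _ _ => And.left)
      _ = min n p := Fin.card_filter_val_lt
      _ ≤ p := min_le_right _ _
  · calc w.prefixCount p k ≤ #{i : Fin n | k ≤ (w i : ℕ)} :=
          card_le_card (monotone_filter_right _ fun _ _ => And.right)
      _ = n - k := card_filter_le_apply w k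

theorem prefixCount_eq_min_of_forall_lt_iff {w : Equiv.Perm (Fin n)} {p : ℕ}
    (hw : ∀ i : Fin n, (i : ℕ) < p ↔ n ≤ (w i : ℕ) + p) (k : ℕ) :
    w.prefixCount p k = min p (n - k) := by
  unfold prefixCount
  rcases le_or_gt (k + p) n with hkp | hkp
  · have : univ.filter (fun i : Fin n => (i : ℕ) < p ∧ k ≤ (w i : ℕ)) =
        univ.filter fun i : Fin n => (i : ℕ) < p := by
      refine filter_congr fun i _ => and_iff_left_of_imp fun hi => ?_
      have := (hw i).mp hi
      omega
    rw [this, Fin.card_filter_val_lt]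
    omega
  · have : univ.filter (fun i : Fin n => (i : ℕ) < p ∧ k ≤ (w i : ℕ)) =
        univ.filter fun i : Fin n => k ≤ (w i : ℕ) := by
      refine filter_congr fun i _ => and_iff_right_of_imp fun hi => (hw i).mpr ?_
      omega
    rw [this, card_filter_le_apply]
    omega

theorem prefixCount_le_of_le_three {u v : Equiv.Perm (Fin n)} (h3 : 3 ≤ n)
    (hv0 : (v ⟨0, by omega⟩ : ℕ) = n - 3) (hv1 : (v ⟨1, by omega⟩ : ℕ) = n - 4)
    (hv2 : (v ⟨2, by omega⟩ : ℕ) = n - 1)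
    (hu0 : (u ⟨0, by omega⟩ : ℕ) ≤ n - 3) (hu1 : (u ⟨1, by omega⟩ : ℕ) ≤ n - 3)
    {p : ℕ} (hp : p ≤ 3) (k : ℕ) : u.prefixCount p k ≤ v.prefixCount p k := by
  have hu_ne : (u ⟨0, by omega⟩ : ℕ) ≠ u ⟨1, by omega⟩ :=
    fun h => absurd (u.injective (Fin.ext h)) (by simp)
  have hu2 := (u ⟨2, by omega⟩).is_lt
  interval_cases p <;>
    simp (disch := omega) only [prefixCount_succ, prefixCount_zero, hv0, hv1, hv2, le_refl] <;>
    split_ifs <;> omega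

end Equiv.Perm

open Equiv.Perm

theorem stmt_17 (n : ℕ) (hn : 4 ≤ n) (v : Equiv.Perm (Fin n))
    (hv : ∀ i : Fin n, (v i : ℕ) =
      if (i : ℕ) = 0 then n - 3
      else if (i : ℕ) = 1 then n - 4
      else if (i : ℕ) = 2 then n - 1
      else if (i : ℕ) = 3 then n - 2
      else n - 1 - (i : ℕ)) :
    ∀ u : Equiv.Perm (Fin n),
      bruhatLE u v ↔
        ((u ⟨0, by omega⟩ : ℕ) ≠ n - 2 ∧ (u ⟨0, by omega⟩ : ℕ) ≠ n - 1 ∧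
          (u ⟨1, by omega⟩ : ℕ) ≠ n - 2 ∧ (u ⟨1, by omega⟩ : ℕ) ≠ n - 1) := by
  intro u
  have hv0 : (v ⟨0, by omega⟩ : ℕ) = n - 3 := by simpa using hv ⟨0, by omega⟩
  have hv1 : (v ⟨1, by omega⟩ : ℕ) = n - 4 := by simpa using hv ⟨1, by omega⟩
  have hv2 : (v ⟨2, by omega⟩ : ℕ) = n - 1 := by simpa using hv ⟨2, by omega⟩
  have hu0 := (u ⟨0, by omega⟩).is_lt
  have hu1 := (u ⟨1, by omega⟩).is_lt
  rw [bruhatLE_iff_prefixCount]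
  constructor
  · intro h
    have h2 := h ⟨1, by omega⟩ ⟨n - 2, by omega⟩
    simp (disch := omega) only [prefixCount_succ, prefixCount_zero, hv0, hv1] at h2
    split_ifs at h2 <;> omega
  · intro hu q k
    rcases lt_or_ge (q : ℕ) 3 with hq | hq
    · exact prefixCount_le_of_le_three (by omega) hv0 hv1 hv2 (by omega) (by omega) hq k
    · have hv_top (i : Fin n) : (i : ℕ) < q + 1 ↔ n ≤ (v i : ℕ) + (q + 1) := by
        have := hv i
        split_ifs at this <;> omega
      rw [prefixCount_eq_min_of_forall_lt_iff hv_top]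
      exact prefixCount_le_min u _ _
end
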